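/- arXiv:math/0605306 — 2 statements merged into one kernel-verified Lean document; each statement's English description precedes it below -/
import Mathlib

section
/- Let ρ and σ be two well agreeing near weights on R. Then ℕ² \ H = ⋃_{a ∈ Γ̃} Δ(a). -/
structure NearWeight (F R : Type*) [Field F] [CommRing R] [Algebra F R] where
  w : R → WithBot ℕ
  N0 : ∀ f : R, w f = ⊥ ↔ f = 0
  N1 : ∀ (c : F) (f : R), c ≠ 0 → w (c • f) = w f
  N2 : ∀ f g : R, w (f + g) ≤ max (w f) (w g)
  N3 : ∀ f g h : R, w f < w g → w (f * h) ≤ w (g * h)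
  N3' : ∀ f g h : R, w f < w g → w 1 < w h → w (f * h) < w (g * h)
  N4 : ∀ f g : R, w 1 < w f → w 1 < w g → w f = w g →
      ∃ c : F, c ≠ 0 ∧ w (f - c • g) < w f
  N5 : ∀ f g : R, w (f * g) ≤ w f + w g
  N5' : ∀ f g : R, w 1 < w f → w 1 < w g → w (f * g) = w f + w g
  norm0 : ∀ f : R, f ≠ 0 → w f ≤ w 1 → w f = 0
  normgcd : ∀ d : ℕ, (∀ f : R, w 1 < w f → ∃ k : ℕ, w f = ((d * k : ℕ) : WithBot ℕ)) → d = 1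

namespace NearWeight

variable {F R : Type*} [Field F] [CommRing R] [Algebra F R]

def U (ρ : NearWeight F R) : Set R := {r | ρ.w r ≤ ρ.w 1}

def M (ρ : NearWeight F R) : Set R := {r | ρ.w 1 < ρ.w r}

def nval (ρ : NearWeight F R) (f : R) : ℕ := WithBot.unbotD 0 (ρ.w f)

def Hset (ρ σ : NearWeight F R) (S : Set R) : Set (ℕ × ℕ) :=
  {p | ∃ f ∈ S, f ≠ 0 ∧ (ρ.nval f, σ.nval f) = p}

def WellAgreeing (ρ σ : NearWeight F R) : Prop :=
  (Hset ρ σ Set.univ)ᶜ.Finite ∧ ρ.U ∩ σ.U = Set.range (algebraMap F R)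

noncomputable def xH (ρ σ : NearWeight F R) (n : ℕ) : ℕ :=
  sInf {m | (m, n) ∈ Hset ρ σ Set.univ}

noncomputable def yH (ρ σ : NearWeight F R) (n : ℕ) : ℕ :=
  sInf {m | (n, m) ∈ Hset ρ σ Set.univ}

def lub (a b : ℕ × ℕ) : ℕ × ℕ := (max a.1 b.1, max a.2 b.2)

noncomputable def Gamma (ρ σ : NearWeight F R) : Set (ℕ × ℕ) :=
  {p | ∃ m : ℕ, p = (m, yH ρ σ m)} ∪ {p | ∃ n : ℕ, p = (xH ρ σ n, n)}

def Hbarx (ρ σ : NearWeight F R) : Set ℕ := {m | (m, 0) ∈ Hset ρ σ Set.univ}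

def Hbary (ρ σ : NearWeight F R) : Set ℕ := {n | (0, n) ∈ Hset ρ σ Set.univ}

noncomputable def GammaTilde (ρ σ : NearWeight F R) : Set (ℕ × ℕ) :=
  {p | ∃ m : ℕ, m ∉ Hbarx ρ σ ∧ p = (m, yH ρ σ m)}

def Delta (p : ℕ × ℕ) : Set (ℕ × ℕ) :=
  {q | (q.1 = p.1 ∧ q.2 < p.2) ∨ (q.2 = p.2 ∧ q.1 < p.1)}

noncomputable def tw (ρ : NearWeight F R) (f : R) : ℤ :=
  sInf {z : ℤ | ∃ g ∈ ρ.M, z = (ρ.nval (f * g) : ℤ) - (ρ.nval g : ℤ)}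

end NearWeight

/-!
Two closure properties of `H` drive the proof. By (N2), `f + g` realises the coordinatewise
maximum of `(ρ f, σ f)` and `(ρ g, σ g)` when these are incomparable; and if `σ f = σ g > 0` but
`ρ g < ρ f`, cancelling leading terms by (N4) lowers `σ` while keeping `ρ f`. The second property
makes the whole of `Δ(m, y_H m)` avoid `H` when `y_H m > 0`, and shows `y_H (x_H n) = n` when
`x_H n > 0`. A gap `(m, n)` then lies either below `(m, y_H m)` or, by the first property, to
the left of `(x_H n, n)`.
-/

lemma exists_fst_mem_of_compl_finite {S : Set (ℕ × ℕ)} (h : Sᶜ.Finite) (n : ℕ) :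
    ∃ m, (m, n) ∈ S := by
  have hinj : Function.Injective fun m : ℕ => (m, n) := fun _ _ => congrArg Prod.fst
  simpa using (h.preimage hinj.injOn).exists_notMem

lemma exists_snd_mem_of_compl_finite {S : Set (ℕ × ℕ)} (h : Sᶜ.Finite) (m : ℕ) :
    ∃ n, (m, n) ∈ S := by
  have hinj : Function.Injective fun n : ℕ => (m, n) := fun _ _ => congrArg Prod.snd
  simpa using (h.preimage hinj.injOn).exists_notMem

namespace NearWeight

variable {F R : Type*} [Field F] [CommRing R] [Algebra F R]

section Weight

variable (ρ : NearWeight F R)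

lemma w_eq_coe_nval {f : R} (hf : f ≠ 0) : ρ.w f = ρ.nval f := by
  rcases h : ρ.w f with _ | k
  · exact absurd ((ρ.N0 f).1 h) hf
  · simp only [nval, h]; rfl

lemma nval_of_w_eq_coe {f : R} {m : ℕ} (h : ρ.w f = m) : ρ.nval f = m := by
  simp [nval, h]

lemma ne_zero_of_w_eq_coe {f : R} {m : ℕ} (h : ρ.w f = m) : f ≠ 0 := fun hf =>
  WithBot.coe_ne_bot (h.symm.trans ((ρ.N0 f).2 hf))

lemma w_neg (g : R) : ρ.w (-g) = ρ.w g := by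
  simpa using ρ.N1 (-1 : F) g (by norm_num)

lemma w_add_eq_left_of_lt {f g : R} (h : ρ.w g < ρ.w f) : ρ.w (f + g) = ρ.w f := by
  refine le_antisymm ((ρ.N2 f g).trans (max_eq_left h.le).le) ?_
  have := ρ.N2 (f + g) (-g)
  rw [add_neg_cancel_right, w_neg] at this
  exact (le_max_iff.1 this).resolve_right h.not_ge

lemma w_one [Nontrivial R] : ρ.w 1 = 0 := ρ.norm0 1 one_ne_zero le_rfl

end Weight

variable {ρ σ : NearWeight F R}

lemma mem_Hset_univ_iff {m n : ℕ} :
    (m, n) ∈ Hset ρ σ Set.univ ↔ ∃ f : R, ρ.w f = m ∧ σ.w f = n := by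
  constructor
  · rintro ⟨f, -, hf, h⟩
    cases h
    exact ⟨f, ρ.w_eq_coe_nval hf, σ.w_eq_coe_nval hf⟩
  · rintro ⟨f, hρ, hσ⟩
    exact ⟨f, trivial, ρ.ne_zero_of_w_eq_coe hρ, by
      rw [ρ.nval_of_w_eq_coe hρ, σ.nval_of_w_eq_coe hσ]⟩

lemma mem_Hset_univ_swap {m n : ℕ} :
    (n, m) ∈ Hset σ ρ Set.univ ↔ (m, n) ∈ Hset ρ σ Set.univ := by
  simp only [mem_Hset_univ_iff, and_comm]

lemma mem_Hset_univ_of_lt_of_lt {m m' n n' : ℕ}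
    (hp : (m, n) ∈ Hset ρ σ Set.univ) (hq : (m', n') ∈ Hset ρ σ Set.univ)
    (hm : m' < m) (hn : n < n') : (m, n') ∈ Hset ρ σ Set.univ := by
  rw [mem_Hset_univ_iff] at hp hq ⊢
  obtain ⟨f, hfρ, hfσ⟩ := hp
  obtain ⟨g, hgρ, hgσ⟩ := hq
  refine ⟨f + g, ?_, ?_⟩
  · rw [ρ.w_add_eq_left_of_lt (by rw [hfρ, hgρ]; exact_mod_cast hm), hfρ]
  · rw [add_comm, σ.w_add_eq_left_of_lt (by rw [hfσ, hgσ]; exact_mod_cast hn), hgσ]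

lemma exists_snd_lt_mem_Hset {m m' n : ℕ}
    (hp : (m, n) ∈ Hset ρ σ Set.univ) (hq : (m', n) ∈ Hset ρ σ Set.univ)
    (hm : m' < m) (hn : 0 < n) : ∃ n' < n, (m, n') ∈ Hset ρ σ Set.univ := by
  rw [mem_Hset_univ_iff] at hp hq
  obtain ⟨f, hfρ, hfσ⟩ := hp
  obtain ⟨g, hgρ, hgσ⟩ := hq
  have := nontrivial_of_ne f 0 (ρ.ne_zero_of_w_eq_coe hfρ)
  have hσM : ∀ {h : R}, σ.w h = n → σ.w 1 < σ.w h := fun hh => by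
    rw [σ.w_one, hh]
    exact_mod_cast hn
  obtain ⟨c, hc, hlt⟩ := σ.N4 f g (hσM hfσ) (hσM hgσ) (hfσ.trans hgσ.symm)
  have hρ : ρ.w (f - c • g) = m := by
    rw [sub_eq_add_neg, ρ.w_add_eq_left_of_lt, hfρ]
    rw [ρ.w_neg, ρ.N1 c g hc, hfρ, hgρ]
    exact_mod_cast hm
  obtain ⟨n', hn'⟩ := WithBot.ne_bot_iff_exists.1
    (mt (σ.N0 _).1 (ρ.ne_zero_of_w_eq_coe hρ))
  rw [hfσ, ← hn'] at hlt
  exact ⟨n', WithBot.coe_lt_coe.1 hlt, mem_Hset_univ_iff.2 ⟨_, hρ, hn'.symm⟩⟩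

lemma exists_fst_lt_mem_Hset {m n n' : ℕ}
    (hp : (m, n) ∈ Hset ρ σ Set.univ) (hq : (m, n') ∈ Hset ρ σ Set.univ)
    (hn : n' < n) (hm : 0 < m) : ∃ m' < m, (m', n) ∈ Hset ρ σ Set.univ := by
  simp only [← mem_Hset_univ_swap (ρ := ρ)] at hp hq ⊢
  exact exists_snd_lt_mem_Hset hp hq hn hm

lemma xH_le {m n : ℕ} (h : (m, n) ∈ Hset ρ σ Set.univ) : xH ρ σ n ≤ m := Nat.sInf_le h

lemma yH_le {m n : ℕ} (h : (m, n) ∈ Hset ρ σ Set.univ) : yH ρ σ m ≤ n := Nat.sInf_le h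

section FiniteGaps

variable (hfin : (Hset ρ σ Set.univ)ᶜ.Finite)
include hfin

lemma xH_mem (n : ℕ) : (xH ρ σ n, n) ∈ Hset ρ σ Set.univ :=
  Nat.sInf_mem (exists_fst_mem_of_compl_finite hfin n)

lemma yH_mem (m : ℕ) : (m, yH ρ σ m) ∈ Hset ρ σ Set.univ :=
  Nat.sInf_mem (exists_snd_mem_of_compl_finite hfin m)

lemma yH_xH {n : ℕ} (hn : 0 < xH ρ σ n) : yH ρ σ (xH ρ σ n) = n := by
  refine (yH_le (xH_mem hfin n)).antisymm (not_lt.1 fun hlt => ?_)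
  obtain ⟨m', hm', hmem⟩ := exists_fst_lt_mem_Hset (xH_mem hfin n) (yH_mem hfin _) hlt hn
  exact hm'.not_ge (xH_le hmem)

lemma Delta_subset_compl_Hset {m : ℕ} (hm : m ∉ Hbarx ρ σ) :
    Delta (m, yH ρ σ m) ⊆ (Hset ρ σ Set.univ)ᶜ := by
  have hpos : 0 < yH ρ σ m :=
    Nat.pos_of_ne_zero fun h0 => hm (by simpa [Hbarx, h0] using yH_mem hfin m)
  rintro ⟨m', n'⟩ (⟨rfl, hlt⟩ | ⟨rfl, hlt⟩) hmem
  · exact hlt.not_ge (yH_le hmem)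
  · obtain ⟨n'', hn'', hmem'⟩ := exists_snd_lt_mem_Hset (yH_mem hfin m) hmem hlt hpos
    exact hn''.not_ge (yH_le hmem')

lemma exists_mem_GammaTilde_mem_Delta {m n : ℕ} (h : (m, n) ∉ Hset ρ σ Set.univ) :
    ∃ a ∈ GammaTilde ρ σ, (m, n) ∈ Delta a := by
  have hy : yH ρ σ m ≠ n := fun hy => h (hy ▸ yH_mem hfin m)
  rcases hy.lt_or_gt with hlt | hlt
  · set m' := xH ρ σ n
    have hmm' : m < m' := by
      refine lt_of_le_of_ne (not_lt.1 fun h' => h ?_) fun he => h (he ▸ xH_mem hfin n)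
      exact mem_Hset_univ_of_lt_of_lt (yH_mem hfin m) (xH_mem hfin n) h' hlt
    have hy' : yH ρ σ m' = n := yH_xH hfin (by omega)
    refine ⟨(m', n), ⟨m', fun hb => ?_, by rw [hy']⟩, Or.inr ⟨rfl, hmm'⟩⟩
    have := yH_le hb
    omega
  · refine ⟨(m, yH ρ σ m), ⟨m, fun hb => ?_, rfl⟩, Or.inl ⟨rfl, hlt⟩⟩
    have := yH_le hb
    omega

end FiniteGaps

end NearWeight

variable {F R : Type*} [Field F] [CommRing R] [Algebra F R]

theorem stmt7_general
    (ρ σ : NearWeight F R) (hwa : NearWeight.WellAgreeing ρ σ) :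
    (NearWeight.Hset ρ σ Set.univ)ᶜ =
      ⋃ a ∈ NearWeight.GammaTilde ρ σ, NearWeight.Delta a := by
  ext ⟨m, n⟩
  simp only [Set.mem_iUnion, exists_prop]
  constructor
  · exact NearWeight.exists_mem_GammaTilde_mem_Delta hwa.1
  · rintro ⟨_, ⟨m₀, hm₀, rfl⟩, hmem⟩
    exact NearWeight.Delta_subset_compl_Hset hwa.1 hm₀ hmem

theorem stmt7
    (hinj : Function.Injective (algebraMap F R))
    (hsur : ¬ Function.Surjective (algebraMap F R))
    (ρ σ : NearWeight F R) (hwa : NearWeight.WellAgreeing ρ σ) :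
    (NearWeight.Hset ρ σ Set.univ)ᶜ =
      ⋃ a ∈ NearWeight.GammaTilde ρ σ, NearWeight.Delta a :=
  stmt7_general ρ σ hwa
end

section
/- Let ρ and σ be two well agreeing near weights on R and let I be a nonzero proper ideal of R. Then, as an F-vector space, R/I is finite dimensional and dim_F(R/I) ≤ #{a ∈ Γ : a ∉ H(I)}. -/
variable {F R : Type*} [Field F] [CommRing R] [Algebra F R]

/-!
For `x ≠ 0` the shift `ρ (x * g) - ρ g` is eventually constant on `M_ρ` (the tilde weight of `x`):
well agreement rules out that `x` maps `M_ρ` into `U_ρ`, and it also yields elements of negative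
`σ`-tilde weight. Multiplying a nonzero element of `I` by a power of such an element and by
elements of value pair `(m, 0)` shows that `H(I)` contains `(m, 0)` for all large `m`, and
symmetrically `(0, n)` for all large `n`; hence only finitely many points of `Γ` lie outside
`H(I)`. By induction on `ρ f + σ f`, the classes of chosen representatives of `Γ \ H(I)` span
`R ⧸ I`: axiom `N4` cancels the leading term of `f` against an element of `I` with the same value
pair, a representative, or (off `Γ`) an element realising a row minimum `yH`.
-/

open Filter

namespace NearWeight

variable {ρ σ : NearWeight F R} {f g x : R}

lemma w_zero (ρ : NearWeight F R) : ρ.w 0 = ⊥ := (ρ.N0 0).2 rfl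

lemma nval_zero (ρ : NearWeight F R) : ρ.nval 0 = 0 := by
  simp [nval, w_zero]

lemma w_eq_nval (ρ : NearWeight F R) (hf : f ≠ 0) : ρ.w f = ρ.nval f := by
  obtain ⟨n, hn⟩ := WithBot.ne_bot_iff_exists.1 (mt (ρ.N0 f).1 hf)
  rw [nval, ← hn, WithBot.unbotD_coe]
  rfl

lemma w_eq_of_nval_eq (ρ : NearWeight F R) (hf : f ≠ 0) (hg : g ≠ 0)
    (h : ρ.nval f = ρ.nval g) : ρ.w f = ρ.w g := by
  rw [w_eq_nval ρ hf, w_eq_nval ρ hg, h]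

lemma nval_le_nval_of_w_le (h : ρ.w f ≤ ρ.w g) : ρ.nval f ≤ ρ.nval g := by
  rcases eq_or_ne f 0 with rfl | hf
  · rw [nval_zero]; exact Nat.zero_le _
  · exact WithBot.unbotD_mono (mt (ρ.N0 f).1 hf) h

lemma nval_lt_nval_of_w_lt (hf : f ≠ 0) (h : ρ.w f < ρ.w g) : ρ.nval f < ρ.nval g := by
  have hg : g ≠ 0 := by rintro rfl; simp [w_zero] at h
  rw [w_eq_nval ρ hf, w_eq_nval ρ hg] at h
  exact_mod_cast h

lemma ne_zero_of_mem_M (hg : g ∈ ρ.M) : g ≠ 0 := by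
  rintro rfl
  exact not_lt_bot (α := WithBot ℕ) (ρ.w_zero ▸ hg : ρ.w 1 < ⊥)

lemma exists_mem_M (ρ : NearWeight F R) : ∃ g, g ∈ ρ.M := by
  by_contra! h
  exact zero_ne_one (ρ.normgcd 0 fun f hf => absurd hf (h f))

theorem nontrivial (ρ : NearWeight F R) : Nontrivial R :=
  let ⟨g, hg⟩ := ρ.exists_mem_M
  ⟨⟨g, 0, ne_zero_of_mem_M hg⟩⟩

lemma w_one_s13 (ρ : NearWeight F R) : ρ.w 1 = 0 :=
  have := ρ.nontrivial
  ρ.norm0 1 one_ne_zero le_rfl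

lemma nval_one (ρ : NearWeight F R) : ρ.nval 1 = 0 := by
  simp [nval, w_one_s13]

lemma mem_M_iff_nval_pos : g ∈ ρ.M ↔ 0 < ρ.nval g := by
  rcases eq_or_ne g 0 with rfl | hg
  · simp [M, w_zero, nval_zero]
  · show ρ.w 1 < ρ.w g ↔ _
    rw [w_one_s13, w_eq_nval ρ hg]
    exact_mod_cast Iff.rfl

lemma mem_U_iff_nval_eq_zero : g ∈ ρ.U ↔ ρ.nval g = 0 := by
  show ρ.w g ≤ ρ.w 1 ↔ _
  rw [← not_lt]
  exact mem_M_iff_nval_pos.not.trans (by omega)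

lemma w_neg_s13 (ρ : NearWeight F R) (f : R) : ρ.w (-f) = ρ.w f := by
  simpa using ρ.N1 (-1) f (by norm_num)

lemma w_sub_le (ρ : NearWeight F R) (f g : R) : ρ.w (f - g) ≤ max (ρ.w f) (ρ.w g) := by
  simpa [sub_eq_add_neg, w_neg_s13] using ρ.N2 f (-g)

lemma w_sub_eq_of_lt (h : ρ.w f < ρ.w g) : ρ.w (f - g) = ρ.w g := by
  refine le_antisymm ((ρ.w_sub_le f g).trans (max_le h.le le_rfl)) ?_
  have := ρ.w_sub_le f (f - g)
  rw [sub_sub_cancel] at this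
  exact (le_max_iff.1 this).resolve_left (not_le.2 h)

lemma nval_sub_le (ρ : NearWeight F R) (f g : R) :
    ρ.nval (f - g) ≤ max (ρ.nval f) (ρ.nval g) := by
  rcases le_total (ρ.w f) (ρ.w g) with h | h
  · exact (nval_le_nval_of_w_le ((ρ.w_sub_le f g).trans (max_le h le_rfl))).trans
      (le_max_right _ _)
  · exact (nval_le_nval_of_w_le ((ρ.w_sub_le f g).trans (max_le le_rfl h))).trans
      (le_max_left _ _)

lemma nval_smul {c : F} (hc : c ≠ 0) (f : R) : ρ.nval (c • f) = ρ.nval f := by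
  simp only [nval, ρ.N1 c f hc]

lemma nval_algebraMap (ρ : NearWeight F R) (c : F) : ρ.nval (algebraMap F R c) = 0 := by
  rcases eq_or_ne c 0 with rfl | hc
  · rw [map_zero, nval_zero]
  · rw [Algebra.algebraMap_eq_smul_one, nval_smul hc, nval_one]

lemma algebraMap_notMem_M (c : F) : algebraMap F R c ∉ ρ.M := by
  rw [mem_M_iff_nval_pos, nval_algebraMap]
  exact lt_irrefl 0

lemma mul_ne_zero_of_mem_M (hf : f ≠ 0) (hg : g ∈ ρ.M) : f * g ≠ 0 := by
  have h := ρ.N3' 0 f g (by rw [w_zero]; exact bot_lt_iff_ne_bot.2 (mt (ρ.N0 f).1 hf)) hg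
  rw [zero_mul, w_zero] at h
  exact mt (ρ.N0 _).2 h.ne'

lemma nval_mul_of_mem_M (hf : f ∈ ρ.M) (hg : g ∈ ρ.M) :
    ρ.nval (f * g) = ρ.nval f + ρ.nval g := by
  have h := ρ.N5' f g hf hg
  rw [w_eq_nval ρ (ne_zero_of_mem_M hf), w_eq_nval ρ (ne_zero_of_mem_M hg),
    w_eq_nval ρ (mul_ne_zero_of_mem_M (ne_zero_of_mem_M hf) hg)] at h
  exact_mod_cast h

lemma mul_mem_M (hf : f ∈ ρ.M) (hg : g ∈ ρ.M) : f * g ∈ ρ.M := by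
  rw [mem_M_iff_nval_pos, nval_mul_of_mem_M hf hg]
  exact Nat.add_pos_left (mem_M_iff_nval_pos.1 hf) _

lemma nval_mul_le (ρ : NearWeight F R) (h : f * g ≠ 0) : ρ.nval (f * g) ≤ ρ.nval f + ρ.nval g := by
  have h5 := ρ.N5 f g
  rw [w_eq_nval ρ h, w_eq_nval ρ (left_ne_zero_of_mul h),
    w_eq_nval ρ (right_ne_zero_of_mul h)] at h5
  exact_mod_cast h5

lemma exists_mem_M_nval_gt (ρ : NearWeight F R) (n : ℕ) : ∃ g ∈ ρ.M, n < ρ.nval g := by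
  induction n with
  | zero =>
    obtain ⟨g, hg⟩ := ρ.exists_mem_M
    exact ⟨g, hg, mem_M_iff_nval_pos.1 hg⟩
  | succ n ih =>
    obtain ⟨g, hg, hn⟩ := ih
    refine ⟨g * g, mul_mem_M hg hg, ?_⟩
    rw [nval_mul_of_mem_M hg hg]
    omega

/-- `e` is the paper's tilde weight of `x`: multiplication by `x` shifts `ρ` by exactly `e` on
all elements of `M_ρ` of large enough weight. -/
def HasTildeWeight (ρ : NearWeight F R) (x : R) (e : ℤ) : Prop :=
  ∃ N : ℕ, ∀ g ∈ ρ.M, N < ρ.nval g → x * g ∈ ρ.M ∧ (ρ.nval (x * g) : ℤ) = ρ.nval g + e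

namespace HasTildeWeight

variable {e e' : ℤ}

lemma exists_large (h : ρ.HasTildeWeight x e) (n : ℕ) :
    ∃ g ∈ ρ.M, n < ρ.nval g ∧ x * g ∈ ρ.M ∧ (ρ.nval (x * g) : ℤ) = ρ.nval g + e := by
  obtain ⟨N, hN⟩ := h
  obtain ⟨g, hg, hgn⟩ := ρ.exists_mem_M_nval_gt (max N n)
  exact ⟨g, hg, by omega, hN g hg (by omega)⟩

lemma ne_zero (h : ρ.HasTildeWeight x e) : x ≠ 0 := by
  obtain ⟨g, -, -, hxg, -⟩ := h.exists_large 0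
  rintro rfl
  exact ne_zero_of_mem_M hxg (zero_mul g)

lemma unique (h : ρ.HasTildeWeight x e) (h' : ρ.HasTildeWeight x e') : e = e' := by
  obtain ⟨N, hN⟩ := h'
  obtain ⟨g, hg, hgN, -, hxg⟩ := h.exists_large N
  have := (hN g hg hgN).2
  omega

/-- The shift is exact on `g * k` for large `k ∈ M_ρ`, and `N5` gives
`ρ (x * g * k) ≤ ρ (x * g) + ρ k`. -/
lemma add_nval_le_nval_mul (h : ρ.HasTildeWeight x e) (hg : g ∈ ρ.M) :
    e + ρ.nval g ≤ ρ.nval (x * g) := by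
  obtain ⟨N, hN⟩ := h
  obtain ⟨k, hk, hkN⟩ := ρ.exists_mem_M_nval_gt N
  have hgk := nval_mul_of_mem_M hg hk
  obtain ⟨hxgk, hval⟩ := hN (g * k) (mul_mem_M hg hk) (by omega)
  rw [← mul_assoc] at hxgk hval
  have := ρ.nval_mul_le (ne_zero_of_mem_M hxgk)
  omega

lemma le_nval (h : ρ.HasTildeWeight x e) : e ≤ ρ.nval x := by
  obtain ⟨g, hg⟩ := ρ.exists_mem_M
  have h1 := h.add_nval_le_nval_mul hg
  have h2 := ρ.nval_mul_le (mul_ne_zero_of_mem_M h.ne_zero hg)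
  omega

lemma of_mem_M (hx : x ∈ ρ.M) : ρ.HasTildeWeight x (ρ.nval x) :=
  ⟨0, fun g hg _ => ⟨mul_mem_M hx hg, by rw [nval_mul_of_mem_M hx hg]; push_cast; ring⟩⟩

lemma mem_M_of_pos (h : ρ.HasTildeWeight x e) (he : 0 < e) :
    x ∈ ρ.M ∧ (ρ.nval x : ℤ) = e := by
  have hx : x ∈ ρ.M := mem_M_iff_nval_pos.2 (by have := h.le_nval; omega)
  exact ⟨hx, (h.unique (of_mem_M hx)).symm⟩

lemma nval_eq_zero_of_nonpos (h : ρ.HasTildeWeight x e) (he : e ≤ 0) : ρ.nval x = 0 := by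
  by_contra hx
  have := h.unique (of_mem_M (mem_M_iff_nval_pos.2 (Nat.pos_of_ne_zero hx)))
  omega

lemma one (ρ : NearWeight F R) : ρ.HasTildeWeight 1 0 :=
  ⟨0, fun g hg _ => by simpa using hg⟩

lemma mul {y : R} (h : ρ.HasTildeWeight x e) (h' : ρ.HasTildeWeight y e') :
    ρ.HasTildeWeight (x * y) (e + e') := by
  obtain ⟨N, hN⟩ := h
  obtain ⟨N', hN'⟩ := h'
  refine ⟨max N' (N + (-e').toNat), fun g hg hgN => ?_⟩
  obtain ⟨hyg, hyval⟩ := hN' g hg (by omega)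
  obtain ⟨hxyg, hxyval⟩ := hN (y * g) hyg (by omega)
  rw [mul_assoc]
  exact ⟨hxyg, by omega⟩

lemma pow (h : ρ.HasTildeWeight x e) (k : ℕ) : ρ.HasTildeWeight (x ^ k) (k * e) := by
  induction k with
  | zero => simpa using one ρ
  | succ k ih => simpa [pow_succ, add_mul] using ih.mul h

/-- Comparing `x * g₀ * g` with `x * g * g₀` forces `x * g ∈ M_ρ` as soon as `g` outweighs `g₀`. -/
lemma of_mul_mem_M {g₀ : R} (hg₀ : g₀ ∈ ρ.M) (hxg₀ : x * g₀ ∈ ρ.M) :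
    ρ.HasTildeWeight x (ρ.nval (x * g₀) - ρ.nval g₀) := by
  refine ⟨ρ.nval g₀, fun g hg hgN => ?_⟩
  have hcomm : x * g₀ * g = x * g * g₀ := by ring
  have h1 := nval_mul_of_mem_M hxg₀ hg
  rw [hcomm] at h1
  have hpos := mem_M_iff_nval_pos.1 hxg₀
  have hxg : x * g ∈ ρ.M := by
    rw [mem_M_iff_nval_pos]
    have h2 := ρ.nval_mul_le (hcomm ▸ ne_zero_of_mem_M (mul_mem_M hxg₀ hg))
    omega
  have h2 := nval_mul_of_mem_M hxg hg₀
  exact ⟨hxg, by omega⟩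

end HasTildeWeight

lemma mem_Hset_comm {S : Set R} {a b : ℕ} : (b, a) ∈ Hset σ ρ S ↔ (a, b) ∈ Hset ρ σ S := by
  simp only [Hset, Set.mem_ofPred_eq, Prod.mk.injEq]
  exact exists_congr fun f => and_congr_right fun _ => and_congr_right fun _ => and_comm

lemma xH_eq_yH (ρ σ : NearWeight F R) (n : ℕ) : xH ρ σ n = yH σ ρ n := by
  simp only [xH, yH, mem_Hset_comm]

namespace WellAgreeing

lemma symm (hwa : WellAgreeing ρ σ) : WellAgreeing σ ρ := by
  refine ⟨(hwa.1.preimage Prod.swap_injective.injOn).subset fun _ hp h => hp (mem_Hset_comm.1 h),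
    ?_⟩
  rw [Set.inter_comm]
  exact hwa.2

lemma eventually_mem_Hset (hwa : WellAgreeing ρ σ) (n : ℕ) :
    ∀ᶠ m in atTop, (m, n) ∈ Hset ρ σ Set.univ := by
  rw [← Nat.cofinite_eq_atTop]
  exact eventually_cofinite.2 (hwa.1.preimage (Prod.mk_left_injective n).injOn)

lemma mem_Hset_yH (hwa : WellAgreeing ρ σ) (m : ℕ) : (m, yH ρ σ m) ∈ Hset ρ σ Set.univ :=
  Nat.sInf_mem ((hwa.symm.eventually_mem_Hset m).exists.imp fun _ => mem_Hset_comm.1)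

lemma Gamma_subset_Hset (hwa : WellAgreeing ρ σ) : Gamma ρ σ ⊆ Hset ρ σ Set.univ := by
  rintro _ (⟨m, rfl⟩ | ⟨n, rfl⟩)
  · exact hwa.mem_Hset_yH m
  · rw [xH_eq_yH]
    exact mem_Hset_comm.1 (hwa.symm.mem_Hset_yH n)

lemma eventually_exists_mem_M (hwa : WellAgreeing ρ σ) :
    ∀ᶠ m in atTop, ∃ u ∈ ρ.M, ρ.nval u = m ∧ σ.nval u = 0 := by
  filter_upwards [hwa.eventually_mem_Hset 0, eventually_gt_atTop 0] with m hmH hm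
  obtain ⟨u, -, -, hu⟩ := hmH
  simp only [Prod.mk.injEq] at hu
  exact ⟨u, mem_M_iff_nval_pos.2 (hu.1 ▸ hm), hu⟩

lemma mul_mem_M_of_forall_mul_notMem_M (hwa : WellAgreeing ρ σ) (hx : x ≠ 0)
    (hxM : ∀ g ∈ ρ.M, x * g ∉ ρ.M) (hg : g ∈ ρ.M) : x * g ∈ σ.M := by
  by_contra hσ
  have hU : x * g ∈ ρ.U ∩ σ.U := ⟨show ρ.w (x * g) ≤ ρ.w 1 from not_lt.1 (hxM g hg),
    show σ.w (x * g) ≤ σ.w 1 from not_lt.1 hσ⟩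
  rw [hwa.2] at hU
  obtain ⟨c, hc⟩ := hU
  have hc0 : c ≠ 0 := by
    rintro rfl
    exact mul_ne_zero_of_mem_M hx hg (by rw [← hc, map_zero])
  obtain ⟨k, hk⟩ := ρ.exists_mem_M
  apply hxM (g * k) (mul_mem_M hg hk)
  rw [← mul_assoc, ← hc, ← Algebra.smul_def]
  show ρ.w 1 < ρ.w (c • k)
  rwa [ρ.N1 c k hc0]

/-- If `x` had no tilde weight, it would map `M_ρ` into `M_σ`; then for `g₀ ∈ M_ρ` minimising
`σ (x * g₀)` and `u` with `ρ u > 0 = σ u`, axiom `N4` applied to `x * g₀` and `x * g₀ * u` yields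
an element `x * g₀ * (1 - c • u)` of even smaller `σ`-weight. -/
theorem exists_hasTildeWeight (hwa : WellAgreeing ρ σ) (hx : x ≠ 0) :
    ∃ e, ρ.HasTildeWeight x e := by
  by_cases h : ∃ g₀ ∈ ρ.M, x * g₀ ∈ ρ.M
  · obtain ⟨g₀, hg₀, hxg₀⟩ := h
    exact ⟨_, .of_mul_mem_M hg₀ hxg₀⟩
  push Not at h
  exfalso
  have hσM := fun g (hg : g ∈ ρ.M) => hwa.mul_mem_M_of_forall_mul_notMem_M hx h hg
  obtain ⟨g₀, hg₀, hmin⟩ :=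
    (measure fun g => σ.nval (x * g)).wf.has_min ρ.M ρ.exists_mem_M
  obtain ⟨-, u, hu, -, hσu⟩ := hwa.eventually_exists_mem_M.exists
  have hg₀u := mul_mem_M hg₀ hu
  have hw : σ.w (x * g₀) = σ.w (x * (g₀ * u)) := by
    refine σ.w_eq_of_nval_eq (ne_zero_of_mem_M (hσM g₀ hg₀))
      (ne_zero_of_mem_M (hσM _ hg₀u)) (le_antisymm (not_lt.1 (hmin _ hg₀u)) ?_)
    have := σ.nval_mul_le (ne_zero_of_mem_M (mul_assoc x g₀ u ▸ hσM _ hg₀u))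
    rw [mul_assoc] at this
    omega
  obtain ⟨c, hc, hlt⟩ := σ.N4 _ _ (hσM g₀ hg₀) (hσM _ hg₀u) hw
  have h1cu : 1 - c • u ∈ ρ.M := by
    show ρ.w 1 < ρ.w (1 - c • u)
    rw [w_sub_eq_of_lt] <;> rwa [ρ.N1 c u hc]
  have hM := mul_mem_M hg₀ h1cu
  rw [show x * g₀ - c • (x * (g₀ * u)) = x * (g₀ * (1 - c • u)) by
    simp only [Algebra.smul_def]; ring] at hlt
  exact hmin _ hM (nval_lt_nval_of_w_lt (mul_ne_zero_of_mem_M hx hM) hlt)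

/-- For `u` with `ρ u > 0 = σ u`, a large `g ∈ M_σ` has `σ (u * g) = σ g`, and `N4` produces
`c` with `σ ((u - c) * g) < σ g`; so `u - c` has negative `σ`-tilde weight unless `u` already has. -/
theorem exists_hasTildeWeight_neg (hwa : WellAgreeing ρ σ) :
    ∃ r e, σ.HasTildeWeight r e ∧ e < 0 := by
  obtain ⟨-, u, hu, -, hσu⟩ := hwa.eventually_exists_mem_M.exists
  obtain ⟨e, he⟩ := hwa.symm.exists_hasTildeWeight (ne_zero_of_mem_M hu)
  rcases lt_or_ge e 0 with hneg | hnn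
  · exact ⟨u, e, he, hneg⟩
  obtain rfl : e = 0 := by have := he.le_nval; omega
  obtain ⟨g, hg, -, hug, hval⟩ := he.exists_large 0
  have hw : σ.w (u * g) = σ.w g :=
    σ.w_eq_of_nval_eq (ne_zero_of_mem_M hug) (ne_zero_of_mem_M hg) (by omega)
  obtain ⟨c, -, hlt⟩ := σ.N4 _ _ hug hg hw
  have hv : u - algebraMap F R c ≠ 0 := fun h => algebraMap_notMem_M c (sub_eq_zero.1 h ▸ hu)
  obtain ⟨ev, hev⟩ := hwa.symm.exists_hasTildeWeight hv
  refine ⟨_, ev, hev, ?_⟩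
  have h1 := hev.add_nval_le_nval_mul hg
  have hvg := mul_ne_zero_of_mem_M hv hg
  rw [sub_mul, ← Algebra.smul_def] at h1 hvg
  have h2 := nval_lt_nval_of_w_lt hvg hlt
  omega

/-- Multiplying a nonzero element of `I` by a power of an element of negative `σ`-tilde weight
pushes its `σ`-tilde weight down to at most `0`. -/
lemma exists_mem_ideal_hasTildeWeight (hwa : WellAgreeing ρ σ) {I : Ideal R} (hI : I ≠ ⊥) :
    ∃ t ∈ I, ∃ c e, ρ.HasTildeWeight t c ∧ σ.HasTildeWeight t e ∧ e ≤ 0 := by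
  obtain ⟨z, hzI, hz0⟩ := Submodule.exists_mem_ne_zero_of_ne_bot hI
  obtain ⟨ρz, hρz⟩ := hwa.exists_hasTildeWeight hz0
  obtain ⟨σz, hσz⟩ := hwa.symm.exists_hasTildeWeight hz0
  obtain ⟨f, ef, hσf, hef⟩ := hwa.exists_hasTildeWeight_neg
  obtain ⟨ρf, hρf⟩ := hwa.exists_hasTildeWeight hσf.ne_zero
  refine ⟨z * f ^ σz.toNat, I.mul_mem_right _ hzI, _, _, hρz.mul (hρf.pow _),
    hσz.mul (hσf.pow _), ?_⟩
  nlinarith [Int.self_le_toNat σz, Int.natCast_nonneg σz.toNat]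

theorem eventually_mem_Hset_ideal (hwa : WellAgreeing ρ σ) {I : Ideal R} (hI : I ≠ ⊥) :
    ∀ᶠ m in atTop, (m, 0) ∈ Hset ρ σ I := by
  obtain ⟨t, htI, c, e, hρt, hσt, he⟩ := hwa.exists_mem_ideal_hasTildeWeight hI
  have hshift : Tendsto (fun m : ℕ => ((m : ℤ) - c).toNat) atTop atTop :=
    tendsto_atTop_atTop.2 fun b => ⟨b + c.toNat, fun a ha => by omega⟩
  filter_upwards [hshift.eventually hwa.eventually_exists_mem_M,
    eventually_ge_atTop (c.toNat + 1)] with m ⟨u, hu, hρu, hσu⟩ hm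
  obtain ⟨eu, heu⟩ := hwa.symm.exists_hasTildeWeight (ne_zero_of_mem_M hu)
  have heu0 := heu.le_nval
  have hρtu := hρt.mul (.of_mem_M hu)
  obtain ⟨-, hval⟩ := hρtu.mem_M_of_pos (by omega)
  refine ⟨t * u, I.mul_mem_right _ htI, hρtu.ne_zero, ?_⟩
  rw [(hσt.mul heu).nval_eq_zero_of_nonpos (by omega), Prod.mk.injEq]
  omega

lemma finite_setOf_yH_notMem (hwa : WellAgreeing ρ σ) {I : Ideal R} (hI : I ≠ ⊥) :
    {m | (m, yH ρ σ m) ∉ Hset ρ σ I}.Finite := by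
  refine eventually_cofinite.1 ?_
  rw [Nat.cofinite_eq_atTop]
  filter_upwards [hwa.eventually_mem_Hset 0, hwa.eventually_mem_Hset_ideal hI] with m h0 hm
  rwa [yH, Nat.sInf_eq_zero.2 (Or.inl h0)]

theorem finite_Gamma_inter_compl (hwa : WellAgreeing ρ σ) {I : Ideal R} (hI : I ≠ ⊥) :
    (Gamma ρ σ ∩ (Hset ρ σ I)ᶜ).Finite := by
  have hcol : {n | (xH ρ σ n, n) ∉ Hset ρ σ I}.Finite :=
    (hwa.symm.finite_setOf_yH_notMem hI).subset fun n hn h => hn (by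
      rw [xH_eq_yH]; exact mem_Hset_comm.1 h)
  refine (((hwa.finite_setOf_yH_notMem hI).image fun m => (m, yH ρ σ m)).union
    (hcol.image fun n => (xH ρ σ n, n))).subset ?_
  rintro _ ⟨⟨m, rfl⟩ | ⟨n, rfl⟩, hp⟩
  · exact Or.inl ⟨m, hp, rfl⟩
  · exact Or.inr ⟨n, hp, rfl⟩

end WellAgreeing

lemma exists_nval_sub_smul_lt (σ : NearWeight F R) (hf : f ∈ ρ.M)
    (hρ : ρ.nval g = ρ.nval f) (hσ : σ.nval g ≤ σ.nval f) :
    ∃ c : F, ρ.nval (f - c • g) < ρ.nval f ∧ σ.nval (f - c • g) ≤ σ.nval f := by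
  have hg : g ∈ ρ.M := mem_M_iff_nval_pos.2 (hρ ▸ mem_M_iff_nval_pos.1 hf)
  obtain ⟨c, hc, hlt⟩ := ρ.N4 f g hf hg
    (ρ.w_eq_of_nval_eq (ne_zero_of_mem_M hf) (ne_zero_of_mem_M hg) hρ.symm)
  refine ⟨c, ?_, (σ.nval_sub_le _ _).trans (max_le le_rfl (by rwa [nval_smul hc]))⟩
  rcases eq_or_ne (f - c • g) 0 with h | h
  · rw [h, nval_zero]
    exact mem_M_iff_nval_pos.1 hf
  · exact nval_lt_nval_of_w_lt h hlt

namespace WellAgreeing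

lemma exists_sub_smul_eq_zero_or_lt (hwa : WellAgreeing ρ σ) (hg : g ≠ 0)
    (hρ : ρ.nval g = ρ.nval f) (hσ : σ.nval g = σ.nval f) :
    ∃ c : F, f - c • g = 0 ∨
      ρ.nval (f - c • g) + σ.nval (f - c • g) < ρ.nval f + σ.nval f := by
  by_cases hfρ : f ∈ ρ.M
  · obtain ⟨c, h1, h2⟩ := exists_nval_sub_smul_lt σ hfρ hρ hσ.le
    exact ⟨c, Or.inr (by omega)⟩
  by_cases hfσ : f ∈ σ.M
  · obtain ⟨c, h1, h2⟩ := exists_nval_sub_smul_lt ρ hfσ hσ hρ.le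
    exact ⟨c, Or.inr (by omega)⟩
  have hF : ∀ h : R, ρ.nval h = 0 → σ.nval h = 0 → h ∈ Set.range (algebraMap F R) :=
    fun h h1 h2 => hwa.2 ▸ ⟨mem_U_iff_nval_eq_zero.2 h1, mem_U_iff_nval_eq_zero.2 h2⟩
  rw [mem_M_iff_nval_pos, Nat.pos_iff_ne_zero, not_not] at hfρ hfσ
  obtain ⟨a, rfl⟩ := hF f hfρ hfσ
  obtain ⟨b, rfl⟩ := hF g (hρ.trans hfρ) (hσ.trans hfσ)
  have hb : b ≠ 0 := by rintro rfl; exact hg (map_zero _)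
  exact ⟨a / b, Or.inl (by rw [Algebra.smul_def, ← map_mul, div_mul_cancel₀ a hb, sub_self])⟩

/-- Off `Γ`, `f` can be reduced against an element with the same `ρ`-weight and the minimal
`σ`-weight `yH ρ σ (ρ f) < σ f` in that row. -/
lemma exists_lt_of_notMem_Gamma (hwa : WellAgreeing ρ σ) (hf : f ≠ 0)
    (hΓ : (ρ.nval f, σ.nval f) ∉ Gamma ρ σ) :
    ∃ (g : R) (c : F), ρ.nval g + σ.nval g < ρ.nval f + σ.nval f ∧
      ρ.nval (f - c • g) + σ.nval (f - c • g) < ρ.nval f + σ.nval f := by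
  have hH : (ρ.nval f, σ.nval f) ∈ Hset ρ σ Set.univ := ⟨f, trivial, hf, rfl⟩
  have hρf : 0 < ρ.nval f := by
    refine Nat.pos_of_ne_zero fun h0 => hΓ (Or.inr ⟨σ.nval f, ?_⟩)
    rw [h0, xH, Nat.sInf_eq_zero.2 (Or.inl (h0 ▸ hH))]
  have hy : yH ρ σ (ρ.nval f) < σ.nval f :=
    lt_of_le_of_ne (Nat.sInf_le hH) fun h => hΓ (Or.inl ⟨_, by rw [h]⟩)
  obtain ⟨g, -, -, hg⟩ := hwa.mem_Hset_yH (ρ.nval f)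
  simp only [Prod.mk.injEq] at hg
  obtain ⟨c, h1, h2⟩ := exists_nval_sub_smul_lt σ (mem_M_iff_nval_pos.2 hρf) hg.1 (hg.2 ▸ hy.le)
  exact ⟨g, c, by omega, by omega⟩

/-- Induction on `ρ f + σ f`: an element whose value pair lies in `H(I)` or in `Γ \ H(I)` is
reduced against an element of `I` or a representative, and one off `Γ` as above. -/
theorem span_range_mk_eq_top (hwa : WellAgreeing ρ σ) (I : Ideal R)
    (rep : ↥(Gamma ρ σ ∩ (Hset ρ σ I)ᶜ) → R) (hrep0 : ∀ p, rep p ≠ 0)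
    (hrep : ∀ p, (ρ.nval (rep p), σ.nval (rep p)) = (p : ℕ × ℕ)) :
    Submodule.span F (Set.range fun p => Ideal.Quotient.mk I (rep p)) = ⊤ := by
  set S := Submodule.span F (Set.range fun p => Ideal.Quotient.mk I (rep p))
  have hS : ∀ (f g : R) (c : F), Ideal.Quotient.mk I g ∈ S →
      Ideal.Quotient.mk I (f - c • g) ∈ S → Ideal.Quotient.mk I f ∈ S := by
    intro f g c hg hfg
    have := S.add_mem hfg (S.smul_mem c hg)
    rwa [← Ideal.Quotient.mkₐ_eq_mk F, ← map_smul, ← map_add, sub_add_cancel] at this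
  rw [eq_top_iff]
  rintro q -
  obtain ⟨f, rfl⟩ := Ideal.Quotient.mk_surjective q
  induction hn : ρ.nval f + σ.nval f using Nat.strong_induction_on generalizing f with
  | _ n ih =>
  subst hn
  have ih' : ∀ h, h = 0 ∨ ρ.nval h + σ.nval h < ρ.nval f + σ.nval f →
      Ideal.Quotient.mk I h ∈ S := by
    rintro h (rfl | hh)
    · rw [map_zero]; exact S.zero_mem
    · exact ih _ hh h rfl
  by_cases hf : f = 0
  · exact ih' f (Or.inl hf)
  by_cases hI : (ρ.nval f, σ.nval f) ∈ Hset ρ σ I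
  · obtain ⟨z, hzI, hz0, hz⟩ := hI
    obtain ⟨c, hc⟩ := hwa.exists_sub_smul_eq_zero_or_lt hz0 (congrArg Prod.fst hz)
      (congrArg Prod.snd hz)
    refine hS f z c ?_ (ih' _ hc)
    rw [Ideal.Quotient.eq_zero_iff_mem.2 hzI]
    exact S.zero_mem
  by_cases hΓ : (ρ.nval f, σ.nval f) ∈ Gamma ρ σ
  · let p : ↥(Gamma ρ σ ∩ (Hset ρ σ I)ᶜ) := ⟨_, hΓ, hI⟩
    obtain ⟨c, hc⟩ := hwa.exists_sub_smul_eq_zero_or_lt (hrep0 p) (congrArg Prod.fst (hrep p))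
      (congrArg Prod.snd (hrep p))
    exact hS f (rep p) c (Submodule.subset_span ⟨p, rfl⟩) (ih' _ hc)
  · obtain ⟨g, c, hg, hfg⟩ := hwa.exists_lt_of_notMem_Gamma hf hΓ
    exact hS f g c (ih' g (Or.inr hg)) (ih' _ (Or.inr hfg))

end WellAgreeing

end NearWeight

theorem stmt13_general
    (ρ σ : NearWeight F R) (hwa : NearWeight.WellAgreeing ρ σ)
    (I : Ideal R) (hI0 : I ≠ ⊥) :
    FiniteDimensional F (R ⧸ I) ∧
    Module.finrank F (R ⧸ I) ≤
      (NearWeight.Gamma ρ σ ∩ (NearWeight.Hset ρ σ (I : Set R))ᶜ).ncard := by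
  have hrep : ∀ p : ↥(NearWeight.Gamma ρ σ ∩ (NearWeight.Hset ρ σ (I : Set R))ᶜ),
      ∃ f : R, f ≠ 0 ∧ (ρ.nval f, σ.nval f) = p := fun p =>
    let ⟨f, _, hf⟩ := hwa.Gamma_subset_Hset p.2.1
    ⟨f, hf⟩
  choose rep hrep0 hrep using hrep
  have hspan := hwa.span_range_mk_eq_top I rep hrep0 hrep
  have := (hwa.finite_Gamma_inter_compl hI0).fintype
  refine ⟨Module.finite_def.2 (hspan ▸ Submodule.fg_span (Set.finite_range _)), ?_⟩
  calc _ ≤ Fintype.card _ := finrank_le_of_span_eq_top hspan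
    _ = _ := by rw [Fintype.card_eq_nat_card, Nat.card_coe_set_eq]

theorem stmt13
    (hinj : Function.Injective (algebraMap F R))
    (hsur : ¬ Function.Surjective (algebraMap F R))
    (ρ σ : NearWeight F R) (hwa : NearWeight.WellAgreeing ρ σ)
    (I : Ideal R) (hI0 : I ≠ ⊥) (hIT : I ≠ ⊤) :
    FiniteDimensional F (R ⧸ I) ∧
    Module.finrank F (R ⧸ I) ≤
      (NearWeight.Gamma ρ σ ∩ (NearWeight.Hset ρ σ (I : Set R))ᶜ).ncard :=
  stmt13_general ρ σ hwa I hI0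
end
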